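/- Let τ > 0, μ > 0, C > 0, let g : ℝ → ℝ be continuous with g(t) ≥ 0 and ∫_0^t g(s) ds ≤ C·t for all t ≥ 0, and let k : ℝ → ℝ be differentiable and satisfy k'(t) = −((√2/2)·τ⁻¹ − τ·g(t))·k(t) for all t ≥ 0. If τ² < √2/(2C), then δ := (√2/2)·τ⁻¹ − τ·C > 0 and |k(t)| ≤ |k(0)|·exp(−δ·t) for all t ≥ 0; in particular k(t) → 0 and the eddy viscosity ν_T(t) := √2·μ·τ·k(t) → 0 exponentially as t → ∞. -/

import Mathlib

open Filter

/-! The equation for `k` is linear with continuous coefficient, so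
`k t = k 0 * exp (-∫₀ᵗ ((√2/2)τ⁻¹ - τ g))`. The bound `∫₀ᵗ g ≤ C t` turns the exponent into
at most `-δ t`, and `δ > 0` is exactly the smallness condition `τ² < √2/(2C)`. -/

theorem eq_mul_exp_integral_of_deriv_eq_mul {p k : ℝ → ℝ} (hp : Continuous p)
    (hk : Differentiable ℝ k) (hode : ∀ t, 0 ≤ t → deriv k t = p t * k t)
    {t : ℝ} (ht : 0 ≤ t) :
    k t = k 0 * Real.exp (∫ s in (0:ℝ)..t, p s) := by
  set P : ℝ → ℝ := fun t => ∫ s in (0:ℝ)..t, p s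
  have hP : ∀ x, HasDerivAt P (p x) x := fun x => (hp.integral_hasStrictDerivAt 0 x).hasDerivAt
  have hconst : ∀ x ∈ Set.Icc (0:ℝ) t,
      k x * Real.exp (-P x) = k 0 * Real.exp (-P 0) := by
    refine constant_of_has_deriv_right_zero ?_ fun x hx => ?_
    · exact (hk.continuous.mul
        (Real.continuous_exp.comp (continuous_iff_continuousAt.2
          fun x => (hP x).continuousAt).neg)).continuousOn
    · have h : HasDerivAt (fun y => k y * Real.exp (-P y))
          (deriv k x * Real.exp (-P x) + k x * (Real.exp (-P x) * -p x)) x :=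
        (hk x).hasDerivAt.mul (hP x).neg.exp
      rw [hode x hx.1] at h
      convert h.hasDerivWithinAt using 1
      ring
  have h := hconst t ⟨ht, le_rfl⟩
  simp only [P, intervalIntegral.integral_same, neg_zero, Real.exp_zero, mul_one] at h
  rw [← h, mul_assoc, ← Real.exp_add, neg_add_cancel, Real.exp_zero, mul_one]

theorem abs_le_abs_mul_exp_of_deriv_eq_mul {p k : ℝ → ℝ} {c : ℝ} (hp : Continuous p)
    (hk : Differentiable ℝ k) (hode : ∀ t, 0 ≤ t → deriv k t = p t * k t)
    (hint : ∀ t, 0 ≤ t → ∫ s in (0:ℝ)..t, p s ≤ c * t) {t : ℝ} (ht : 0 ≤ t) :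
    |k t| ≤ |k 0| * Real.exp (c * t) := by
  rw [eq_mul_exp_integral_of_deriv_eq_mul hp hk hode ht, abs_mul, Real.abs_exp]
  gcongr
  exact hint t ht

theorem tendsto_zero_of_abs_le_mul_exp_neg {k : ℝ → ℝ} {M δ : ℝ} (hδ : 0 < δ)
    (hbound : ∀ t, 0 ≤ t → |k t| ≤ M * Real.exp (-δ * t)) :
    Tendsto k atTop (nhds 0) := by
  have hexp : Tendsto (fun t => M * Real.exp (-δ * t)) atTop (nhds 0) := by
    simpa using (Real.tendsto_exp_atBot.comp
      (tendsto_id.const_mul_atTop_of_neg (neg_neg_of_pos hδ))).const_mul M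
  rw [tendsto_zero_iff_abs_tendsto_zero]
  exact squeeze_zero' (Eventually.of_forall fun t => abs_nonneg _)
    ((eventually_ge_atTop 0).mono hbound) hexp

theorem half_equation_model_convergence_to_NSE_general
    (τ μ C : ℝ) (hτ : 0 < τ) (hC : 0 < C)
    (g k : ℝ → ℝ)
    (hg : Continuous g)
    (hgint : ∀ t, 0 ≤ t → (∫ s in (0:ℝ)..t, g s) ≤ C * t)
    (hk : Differentiable ℝ k)
    (hode : ∀ t, 0 ≤ t →
      deriv k t = -((Real.sqrt 2 / 2) * τ⁻¹ - τ * g t) * k t)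
    (hτsmall : τ ^ 2 < Real.sqrt 2 / (2 * C)) :
    0 < (Real.sqrt 2 / 2) * τ⁻¹ - τ * C ∧
    (∀ t, 0 ≤ t →
      |k t| ≤ |k 0| * Real.exp (-((Real.sqrt 2 / 2) * τ⁻¹ - τ * C) * t)) ∧
    Tendsto k atTop (nhds 0) ∧
    Tendsto (fun t => Real.sqrt 2 * μ * τ * k t) atTop (nhds 0) := by
  set a := Real.sqrt 2 / 2 * τ⁻¹ with ha
  have hδ : 0 < a - τ * C := by
    rw [lt_div_iff₀ (by positivity)] at hτsmall
    rw [sub_pos, ha, ← div_eq_mul_inv, lt_div_iff₀ hτ]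
    nlinarith
  have hp : Continuous fun t => -(a - τ * g t) := by fun_prop
  have hint : ∀ t, 0 ≤ t → ∫ s in (0:ℝ)..t, -(a - τ * g s) ≤ -(a - τ * C) * t := by
    intro t ht
    have hgi : IntervalIntegrable g MeasureTheory.volume 0 t := hg.intervalIntegrable 0 t
    have hcompute : ∫ s in (0:ℝ)..t, -(a - τ * g s) = τ * (∫ s in (0:ℝ)..t, g s) - a * t := by
      rw [intervalIntegral.integral_neg, intervalIntegral.integral_sub intervalIntegrable_const
        (hgi.const_mul τ), intervalIntegral.integral_const, intervalIntegral.integral_const_mul,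
        smul_eq_mul, sub_zero]
      ring
    rw [hcompute]
    nlinarith [mul_le_mul_of_nonneg_left (hgint t ht) hτ.le]
  have hbound := fun t ht => abs_le_abs_mul_exp_of_deriv_eq_mul hp hk hode hint (t := t) ht
  have hlim := tendsto_zero_of_abs_le_mul_exp_neg hδ hbound
  exact ⟨hδ, hbound, hlim, by simpa using hlim.const_mul (Real.sqrt 2 * μ * τ)⟩

/-- Proposition 2.1 (model convergence to NSE): if
`k' = -((√2/2)τ⁻¹ - τ g(t)) k` with `g ≥ 0` continuous, `∫_0^t g ≤ C t`, and
`τ² < √2/(2C)`, then `δ := (√2/2)τ⁻¹ - τ C > 0`, `|k t| ≤ |k 0| exp(-δ t)`,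
and both `k` and the eddy viscosity `ν_T = √2 μ τ k` tend to `0`. -/
theorem half_equation_model_convergence_to_NSE
    (τ μ C : ℝ) (hτ : 0 < τ) (hμ : 0 < μ) (hC : 0 < C)
    (g k : ℝ → ℝ)
    (hg : Continuous g)
    (hgnonneg : ∀ t, 0 ≤ t → 0 ≤ g t)
    (hgint : ∀ t, 0 ≤ t → (∫ s in (0:ℝ)..t, g s) ≤ C * t)
    (hk : Differentiable ℝ k)
    (hode : ∀ t, 0 ≤ t →
      deriv k t = -((Real.sqrt 2 / 2) * τ⁻¹ - τ * g t) * k t)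
    (hτsmall : τ ^ 2 < Real.sqrt 2 / (2 * C)) :
    0 < (Real.sqrt 2 / 2) * τ⁻¹ - τ * C ∧
    (∀ t, 0 ≤ t →
      |k t| ≤ |k 0| * Real.exp (-((Real.sqrt 2 / 2) * τ⁻¹ - τ * C) * t)) ∧
    Tendsto k atTop (nhds 0) ∧
    Tendsto (fun t => Real.sqrt 2 * μ * τ * k t) atTop (nhds 0) :=
  half_equation_model_convergence_to_NSE_general τ μ C hτ hC g k hg hgint hk hode hτsmall
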